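/- arXiv:1109.6669 — 3 statements merged into one kernel-verified Lean document; each statement's English description precedes it below -/
import Mathlib

section
/- Let λ be a typed k-strict partition of length ℓ with λ_i + λ_j ≥ 2k + j − i for all i < j ≤ ℓ. Then H_λ(x;y) equals: 2^{−ℓ} Q_λ(x;y) if λ_ℓ > k; 2^{−ℓ}(Q_λ + e_k(y) Q_{λ−k}) if type(λ) = 1; 2^{−ℓ}(Q_λ − e_k(y) Q_{λ−k}) if type(λ) = 2; and 2^{1−ℓ} Q_λ if λ_ℓ < k; where Q_μ(x;y) = ∏_{i<j} ((1−R_{ij})/(1+R_{ij})) ϑ_μ. -/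
/-!
Under the hypothesis on `λ_i + λ_j` every pair `i < j` lies in `Dlam`, so `R^λ` is the operator
defining `Q`, and every part except possibly the last exceeds `k`, which fixes `ℓ_k(λ)`.
For type `0` the `⋆`-action is the ordinary one and `H_λ = 2^{-ℓ_k} Q_λ`. For type `t ≠ 0` a
monomial involving the index `d` acts with weight `1/2`, while one avoiding `d` replaces
`ϑ_k = ϑ_{λ_d}` by `(ϑ_k ± e_k)/2`; the correction is `± e_k/2` times that monomial acting on
`λ - k`, and the monomials avoiding `d` are exactly the raising operators of `λ - k`.
-/

namespace Stmt13

noncomputable section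

variable {R : Type*} [CommRing R] [Algebra ℚ R]

def rapply {L : ℕ} (nn : Fin L → Fin L → ℕ) (lam : Fin L → ℤ) : Fin L → ℤ :=
  fun p => lam p + (∑ j, (nn p j : ℤ)) - ∑ h, (nn h p : ℤ)

def pairCoef {L : ℕ} (D : Finset (Fin L × Fin L)) (i j : Fin L) (m : ℕ) : ℚ :=
  if i < j then
    (if (i, j) ∈ D then (if m = 0 then 1 else 2 * (-1 : ℚ) ^ m)
     else (if m = 0 then 1 else if m = 1 then -1 else 0))
  else (if m = 0 then 1 else 0)

def coefRD {L : ℕ} (D : Finset (Fin L × Fin L)) (nn : Fin L → Fin L → ℕ) : ℚ :=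
  ∏ i, ∏ j, pairCoef D i j (nn i j)

def Dlam {L : ℕ} (k : ℕ) (lam : Fin (L + 1) → ℕ) :
    Finset (Fin (L + 1) × Fin (L + 1)) :=
  Finset.univ.filter fun q => q.1 < q.2 ∧
    2 * k + (q.2 : ℕ) ≤ lam q.1 + lam q.2 + (q.1 : ℕ)

def lk {L : ℕ} (k : ℕ) (lam : Fin (L + 1) → ℕ) : ℕ :=
  (Finset.univ.filter fun i => k < lam i).card

def starval {L : ℕ} (theta : ℤ → R) (etak eta'k : R)
    (t : ℕ) (d : Fin (L + 1)) (lam : Fin (L + 1) → ℕ)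
    (nn : Fin (L + 1) → Fin (L + 1) → ℕ) : R :=
  if t = 0 then ∏ i, theta (rapply nn (fun i => (lam i : ℤ)) i)
  else if (∃ j, nn d j ≠ 0) ∨ (∃ i, nn i d ≠ 0) then
    (1 / 2 : ℚ) • ∏ i, theta (rapply nn (fun i => (lam i : ℤ)) i)
  else
    (if t = 1 then etak else eta'k) *
      ∏ i : Fin L, theta (rapply nn (fun i => (lam i : ℤ)) (d.succAbove i))

def H {L : ℕ} (k : ℕ) (theta : ℤ → R) (etak eta'k : R)
    (t : ℕ) (d : Fin (L + 1)) (lam : Fin (L + 1) → ℕ) : R :=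
  ((2 : ℚ) ^ lk k lam)⁻¹ •
    ∑ᶠ nn : Fin (L + 1) → Fin (L + 1) → ℕ,
      coefRD (Dlam k lam) nn • starval theta etak eta'k t d lam nn

/-- `Q_μ = ∏_{i<j} (1-R_{ij})(1+R_{ij})^{-1} ϑ_μ`. -/
def Q (theta : ℤ → R) {M : ℕ} (mu : Fin M → ℤ) : R :=
  ∑ᶠ nn : Fin M → Fin M → ℕ,
    coefRD (Finset.univ.filter fun q : Fin M × Fin M => q.1 < q.2) nn •
      ∏ i, theta (rapply nn mu i)

end

end Stmt13

namespace Stmt13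

open Finset Function

section Support

variable {M : ℕ}

theorem eq_zero_of_coefRD_ne_zero {D : Finset (Fin M × Fin M)} {nn : Fin M → Fin M → ℕ}
    (h : coefRD D nn ≠ 0) {i j : Fin M} (hij : ¬ i < j) : nn i j = 0 := by
  by_contra hne
  refine h (prod_eq_zero (mem_univ i) (prod_eq_zero (mem_univ j) ?_))
  simp [pairCoef, hij, hne]

theorem sum_mul_rapply (nn : Fin M → Fin M → ℕ) (mu : Fin M → ℤ) :
    ∑ p : Fin M, (p : ℤ) * rapply nn mu p
      = ∑ p : Fin M, (p : ℤ) * mu p - ∑ i : Fin M, ∑ j : Fin M, ((j : ℤ) - i) * nn i j := by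
  simp only [rapply, mul_add, mul_sub, sub_mul, mul_sum, sum_add_distrib, sum_sub_distrib]
  rw [sum_comm (f := fun (p h : Fin M) => (p : ℤ) * nn h p)]
  ring

/-- Raising operators move weight `∑ p * μ_p` down by `(j - i) * n_ij ≥ n_ij`, so the exponents
are bounded as long as every part stays nonnegative. -/
theorem natCast_le_of_rapply_nonneg {nn : Fin M → Fin M → ℕ} {mu : Fin M → ℤ}
    (hupper : ∀ i j, ¬ i < j → nn i j = 0) (hnonneg : ∀ p, 0 ≤ rapply nn mu p) (a b : Fin M) :
    (nn a b : ℤ) ≤ ∑ p : Fin M, (p : ℤ) * mu p := by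
  have hterm : ∀ i j : Fin M, (nn i j : ℤ) ≤ ((j : ℤ) - i) * nn i j := by
    intro i j
    by_cases h : i < j
    · have : (1 : ℤ) ≤ (j : ℤ) - i := by simp only [Fin.lt_def] at h; omega
      nlinarith [Int.natCast_nonneg (nn i j)]
    · simp [hupper i j h]
  have hterm₀ : ∀ i j : Fin M, 0 ≤ ((j : ℤ) - i) * nn i j :=
    fun i j => (Int.natCast_nonneg _).trans (hterm i j)
  calc (nn a b : ℤ) ≤ ((b : ℤ) - a) * nn a b := hterm a b
    _ ≤ ∑ j : Fin M, ((j : ℤ) - a) * nn a j := single_le_sum (fun j _ => hterm₀ a j) (mem_univ b)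
    _ ≤ ∑ i : Fin M, ∑ j : Fin M, ((j : ℤ) - i) * nn i j :=
        single_le_sum (fun i _ => sum_nonneg fun j _ => hterm₀ i j) (mem_univ a)
    _ ≤ ∑ p : Fin M, (p : ℤ) * mu p := by
        have : 0 ≤ ∑ p : Fin M, (p : ℤ) * rapply nn mu p :=
          sum_nonneg fun p _ => mul_nonneg (by positivity) (hnonneg p)
        linarith [sum_mul_rapply nn mu]

theorem finite_setOf_rapply_nonneg (mu : Fin M → ℤ) :
    {nn : Fin M → Fin M → ℕ | (∀ i j, ¬ i < j → nn i j = 0) ∧ ∀ p, 0 ≤ rapply nn mu p}.Finite := by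
  refine (Set.finite_Iic fun _ _ => (∑ p : Fin M, (p : ℤ) * mu p).toNat).subset ?_
  rintro nn ⟨hupper, hnonneg⟩ i j
  have := natCast_le_of_rapply_nonneg hupper hnonneg i j
  change nn i j ≤ (∑ p : Fin M, (p : ℤ) * mu p).toNat
  omega

variable {R : Type*} [CommRing R] [Algebra ℚ R]

theorem hasFiniteSupport_coefRD_smul_prod {theta : ℤ → R} (hthneg : ∀ r : ℤ, r < 0 → theta r = 0)
    (D : Finset (Fin M × Fin M)) (mu : Fin M → ℤ) :
    HasFiniteSupport fun nn : Fin M → Fin M → ℕ => coefRD D nn • ∏ i, theta (rapply nn mu i) := by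
  refine (finite_setOf_rapply_nonneg mu).subset fun nn hnn => ⟨?_, fun p => ?_⟩
  · exact fun i j => eq_zero_of_coefRD_ne_zero (left_ne_zero_of_smul hnn)
  · by_contra hneg
    exact right_ne_zero_of_smul hnn (prod_eq_zero (mem_univ p) (hthneg _ (not_le.mp hneg)))

end Support

def upperPairs (M : ℕ) : Finset (Fin M × Fin M) :=
  univ.filter fun q => q.1 < q.2

theorem Q_eq_finsum {R : Type*} [CommRing R] [Algebra ℚ R] (theta : ℤ → R) {M : ℕ} (mu : Fin M → ℤ) :
    Q theta mu = ∑ᶠ nn : Fin M → Fin M → ℕ, coefRD (upperPairs M) nn • ∏ i, theta (rapply nn mu i) :=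
  rfl

theorem Dlam_eq_upperPairs {L k : ℕ} {lam : Fin (L + 1) → ℕ}
    (hhigh : ∀ i j : Fin (L + 1), i < j → 2 * k + (j : ℕ) ≤ lam i + lam j + (i : ℕ)) :
    Dlam k lam = upperPairs (L + 1) := by
  ext q
  simpa [Dlam, upperPairs] using hhigh q.1 q.2

section RemoveIndex

variable {L : ℕ} (d : Fin (L + 1))

def avoiding : Set (Fin (L + 1) → Fin (L + 1) → ℕ) :=
  {nn | (∀ j, nn d j = 0) ∧ ∀ i, nn i d = 0}

def insertZero (m : Fin L → Fin L → ℕ) : Fin (L + 1) → Fin (L + 1) → ℕ :=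
  Fin.insertNth (α := fun _ => Fin (L + 1) → ℕ) d 0 fun a => Fin.insertNth (α := fun _ => ℕ) d 0 (m a)

@[simp]
theorem insertZero_succAbove (m : Fin L → Fin L → ℕ) (a b : Fin L) :
    insertZero d m (d.succAbove a) (d.succAbove b) = m a b := by
  simp [insertZero]

@[simp]
theorem insertZero_self_left (m : Fin L → Fin L → ℕ) (j : Fin (L + 1)) : insertZero d m d j = 0 := by
  simp [insertZero]

@[simp]
theorem insertZero_self_right (m : Fin L → Fin L → ℕ) (i : Fin (L + 1)) : insertZero d m i d = 0 := by
  cases i using Fin.succAboveCases d <;> simp [insertZero]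

theorem insertZero_injective : Injective (insertZero d) := fun m m' h => by
  funext a b
  simpa using congrFun (congrFun h (d.succAbove a)) (d.succAbove b)

theorem range_insertZero : Set.range (insertZero d) = avoiding d := by
  ext nn
  refine ⟨?_, fun ⟨hrow, hcol⟩ => ⟨fun a b => nn (d.succAbove a) (d.succAbove b), ?_⟩⟩
  · rintro ⟨m, rfl⟩
    exact ⟨insertZero_self_left d m, insertZero_self_right d m⟩
  · funext i j
    cases i using Fin.succAboveCases d
    · simp [hrow]
    cases j using Fin.succAboveCases d <;> simp [hcol]

theorem rapply_insertZero_succAbove (m : Fin L → Fin L → ℕ) (mu : Fin (L + 1) → ℤ) (a : Fin L) :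
    rapply (insertZero d m) mu (d.succAbove a) = rapply m (fun b => mu (d.succAbove b)) a := by
  simp [rapply, Fin.sum_univ_succAbove _ d]

theorem rapply_self_of_mem_avoiding {nn : Fin (L + 1) → Fin (L + 1) → ℕ} (hnn : nn ∈ avoiding d)
    (mu : Fin (L + 1) → ℤ) : rapply nn mu d = mu d := by
  simp [rapply, hnn.1, hnn.2]

theorem coefRD_insertZero (m : Fin L → Fin L → ℕ) :
    coefRD (upperPairs (L + 1)) (insertZero d m) = coefRD (upperPairs L) m := by
  simp [coefRD, Fin.prod_univ_succAbove _ d, pairCoef, upperPairs,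
    Fin.succAbove_lt_succAbove_iff]

end RemoveIndex

section Split

variable {R : Type*} [CommRing R] [Algebra ℚ R] {L : ℕ} (d : Fin (L + 1))

theorem finsum_indicator_avoiding (theta : ℤ → R) (mu : Fin (L + 1) → ℤ) :
    ∑ᶠ nn, (avoiding d).indicator (fun nn => coefRD (upperPairs (L + 1)) nn •
      ∏ i : Fin L, theta (rapply nn mu (d.succAbove i))) nn = Q theta fun i => mu (d.succAbove i) := by
  rw [← finsum_mem_def, ← range_insertZero, finsum_mem_range (insertZero_injective d)]
  simp only [coefRD_insertZero, rapply_insertZero_succAbove]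
  rfl

theorem hasFiniteSupport_indicator_avoiding {theta : ℤ → R}
    (hthneg : ∀ r : ℤ, r < 0 → theta r = 0) (mu : Fin (L + 1) → ℤ) :
    HasFiniteSupport ((avoiding d).indicator fun nn => coefRD (upperPairs (L + 1)) nn •
      ∏ i : Fin L, theta (rapply nn mu (d.succAbove i))) := by
  refine ((hasFiniteSupport_coefRD_smul_prod hthneg (upperPairs L)
    fun b => mu (d.succAbove b)).image (insertZero d)).subset fun nn hnn => ?_
  obtain ⟨m, rfl⟩ : nn ∈ Set.range (insertZero d) := by
    rw [range_insertZero]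
    exact Set.mem_of_indicator_ne_zero hnn
  refine ⟨m, ?_, rfl⟩
  simpa [avoiding, coefRD_insertZero, rapply_insertZero_succAbove] using hnn

theorem finsum_coefRD_smul_split {theta : ℤ → R} (hthneg : ∀ r : ℤ, r < 0 → theta r = 0)
    (mu : Fin (L + 1) → ℤ) (s : R) :
    ∑ᶠ nn, coefRD (upperPairs (L + 1)) nn •
      (if (∃ j, nn d j ≠ 0) ∨ (∃ i, nn i d ≠ 0) then (1 / 2 : ℚ) • ∏ i, theta (rapply nn mu i)
        else ((1 / 2 : ℚ) • (theta (mu d) + s)) * ∏ i : Fin L, theta (rapply nn mu (d.succAbove i)))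
      = (1 / 2 : ℚ) • (Q theta mu + s * Q theta fun i => mu (d.succAbove i)) := by
  set F := fun nn : Fin (L + 1) → Fin (L + 1) → ℕ =>
    coefRD (upperPairs (L + 1)) nn • ∏ i, theta (rapply nn mu i)
  set G := (avoiding d).indicator fun nn => coefRD (upperPairs (L + 1)) nn •
    ∏ i : Fin L, theta (rapply nn mu (d.succAbove i))
  have hF : HasFiniteSupport F := hasFiniteSupport_coefRD_smul_prod hthneg _ mu
  have hG : HasFiniteSupport fun nn => s * G nn :=
    (hasFiniteSupport_indicator_avoiding d hthneg mu).subset (support_mul_subset_right _ _)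
  have hsplit : ∀ nn, coefRD (upperPairs (L + 1)) nn •
      (if (∃ j, nn d j ≠ 0) ∨ (∃ i, nn i d ≠ 0) then (1 / 2 : ℚ) • ∏ i, theta (rapply nn mu i)
        else ((1 / 2 : ℚ) • (theta (mu d) + s)) * ∏ i : Fin L, theta (rapply nn mu (d.succAbove i)))
      = (1 / 2 : ℚ) • (F nn + s * G nn) := by
    intro nn
    by_cases hnn : nn ∈ avoiding d
    · have hnot : ¬ ((∃ j, nn d j ≠ 0) ∨ (∃ i, nn i d ≠ 0)) := by
        simpa [avoiding] using hnn
      simp only [F, G, if_neg hnot, Set.indicator_of_mem hnn, Fin.prod_univ_succAbove _ d,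
        rapply_self_of_mem_avoiding d hnn]
      simp only [smul_mul_assoc, add_mul, mul_smul_comm]
      module
    · have hne : (∃ j, nn d j ≠ 0) ∨ (∃ i, nn i d ≠ 0) := by
        simpa [avoiding, or_iff_not_imp_left] using hnn
      simp only [F, G, if_pos hne, Set.indicator_of_notMem hnn, mul_zero, add_zero]
      exact smul_comm _ _ _
  rw [finsum_congr hsplit, ← smul_finsum' _ (f := fun nn => F nn + s * G nn) (hF.add hG), finsum_add_distrib hF hG,
    ← mul_finsum' _ _ (hasFiniteSupport_indicator_avoiding d hthneg mu),
    finsum_indicator_avoiding]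
  rfl

end Split

section EtaPolynomial

variable {L k : ℕ} {lam : Fin (L + 1) → ℕ}

theorem lk_eq_of_lt_last (hanti : Antitone lam) (hlt : k < lam (Fin.last L)) : lk k lam = L + 1 := by
  simp [lk, fun i => hlt.trans_le (hanti (Fin.le_last i))]

theorem lt_of_last_le
    (hhigh : ∀ i j : Fin (L + 1), i < j → 2 * k + (j : ℕ) ≤ lam i + lam j + (i : ℕ))
    (hle : lam (Fin.last L) ≤ k) {i : Fin (L + 1)} (hi : i ≠ Fin.last L) : k < lam i := by
  have hiL : (i : ℕ) < L := Fin.val_lt_last hi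
  have := hhigh i (Fin.last L) hiL
  simp only [Fin.val_last] at this
  omega

theorem lk_eq_of_last_le
    (hhigh : ∀ i j : Fin (L + 1), i < j → 2 * k + (j : ℕ) ≤ lam i + lam j + (i : ℕ))
    (hle : lam (Fin.last L) ≤ k) : lk k lam = L := by
  have : (univ.filter fun i => k < lam i) = univ.erase (Fin.last L) := by
    ext i
    simp only [mem_filter, mem_univ, true_and, mem_erase, and_true]
    exact ⟨fun h hi => (hi ▸ h).not_ge hle, lt_of_last_le hhigh hle⟩
  simp [lk, this]

variable {R : Type*} [CommRing R] [Algebra ℚ R] {theta : ℤ → R} {etak eta'k : R} {d : Fin (L + 1)}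

theorem H_zero
    (hhigh : ∀ i j : Fin (L + 1), i < j → 2 * k + (j : ℕ) ≤ lam i + lam j + (i : ℕ)) :
    H k theta etak eta'k 0 d lam = ((2 : ℚ) ^ lk k lam)⁻¹ • Q theta fun i => (lam i : ℤ) := by
  simp [H, starval, Dlam_eq_upperPairs hhigh, Q_eq_finsum]

theorem H_of_ne_zero (hthneg : ∀ r : ℤ, r < 0 → theta r = 0)
    (hhigh : ∀ i j : Fin (L + 1), i < j → 2 * k + (j : ℕ) ≤ lam i + lam j + (i : ℕ))
    {t : ℕ} (ht : t ≠ 0) (hdk : lam d = k) (s : R)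
    (hs : (if t = 1 then etak else eta'k) = (1 / 2 : ℚ) • (theta k + s)) :
    H k theta etak eta'k t d lam = ((2 : ℚ) ^ (lk k lam + 1))⁻¹ •
      (Q theta (fun i => (lam i : ℤ)) + s * Q theta fun i => (lam (d.succAbove i) : ℤ)) := by
  have hsd : (if t = 1 then etak else eta'k) = (1 / 2 : ℚ) • (theta (lam d) + s) := by
    rw [hs, hdk]
  simp only [H, starval, if_neg ht, hsd, Dlam_eq_upperPairs hhigh]
  rw [finsum_coefRD_smul_split d hthneg, smul_smul, pow_succ, mul_inv, one_div]

end EtaPolynomial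

end Stmt13

open Stmt13 in
theorem stmt13_general (R : Type*) [CommRing R] [Algebra ℚ R]
    (k : ℕ)
    (theta : ℤ → R) (hthneg : ∀ r : ℤ, r < 0 → theta r = 0)
    (ek : R) (etak eta'k : R)
    (hetak : etak = (1 / 2 : ℚ) • (theta k + ek))
    (heta'k : eta'k = (1 / 2 : ℚ) • (theta k - ek))
    (L : ℕ) (lam : Fin (L + 1) → ℕ)
    (hanti : Antitone lam)
    (t : ℕ) (htype : t ≠ 0 ↔ ∃ i, lam i = k)
    (d : Fin (L + 1)) (hd : t ≠ 0 → (lam d = k ∧ ∀ i, i < d → k < lam i))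
    (hhigh : ∀ i j : Fin (L + 1), i < j →
      2 * k + (j : ℕ) ≤ lam i + lam j + (i : ℕ)) :
    (k < lam (Fin.last L) →
      H k theta etak eta'k t d lam =
        ((2 : ℚ) ^ (L + 1))⁻¹ • Q theta (fun i => (lam i : ℤ))) ∧
    (t = 1 →
      H k theta etak eta'k t d lam =
        ((2 : ℚ) ^ (L + 1))⁻¹ •
          (Q theta (fun i => (lam i : ℤ)) +
            ek * Q theta (fun i : Fin L => (lam (d.succAbove i) : ℤ)))) ∧
    (t = 2 →
      H k theta etak eta'k t d lam =
        ((2 : ℚ) ^ (L + 1))⁻¹ •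
          (Q theta (fun i => (lam i : ℤ)) -
            ek * Q theta (fun i : Fin L => (lam (d.succAbove i) : ℤ)))) ∧
    (lam (Fin.last L) < k →
      H k theta etak eta'k t d lam =
        ((2 : ℚ) ^ L)⁻¹ • Q theta (fun i => (lam i : ℤ))) := by
  have hlast_le : t ≠ 0 → lam (Fin.last L) ≤ k := fun ht =>
    (hd ht).1 ▸ hanti (Fin.le_last d)
  refine ⟨fun hlt => ?_, fun ht => ?_, fun ht => ?_, fun hlt => ?_⟩
  · obtain rfl : t = 0 := by
      by_contra ht
      obtain ⟨i, hi⟩ := htype.mp ht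
      exact (hlt.trans_le (hanti (Fin.le_last i))).ne' hi
    rw [H_zero hhigh, lk_eq_of_lt_last hanti hlt]
  · subst ht
    rw [H_of_ne_zero hthneg hhigh one_ne_zero (hd one_ne_zero).1 ek (by simpa using hetak),
      lk_eq_of_last_le hhigh (hlast_le one_ne_zero)]
  · subst ht
    rw [H_of_ne_zero hthneg hhigh two_ne_zero (hd two_ne_zero).1 (-ek)
        (by simpa [sub_eq_add_neg] using heta'k),
      lk_eq_of_last_le hhigh (hlast_le two_ne_zero), neg_mul, ← sub_eq_add_neg]
  · obtain rfl : t = 0 := by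
      by_contra ht
      obtain ⟨i, hi⟩ := htype.mp ht
      by_cases hil : i = Fin.last L
      · exact hlt.ne (hil ▸ hi)
      · exact (lt_of_last_le hhigh hlt.le hil).ne' hi
    rw [H_zero hhigh, lk_eq_of_last_le hhigh hlt.le]

open Stmt13 in
theorem stmt13 (R : Type*) [CommRing R] [Algebra ℚ R]
    (k : ℕ) (hk : 1 ≤ k)
    (theta : ℤ → R) (hthneg : ∀ r : ℤ, r < 0 → theta r = 0)
    (ek : R) (etak eta'k : R)
    (hetak : etak = (1 / 2 : ℚ) • (theta k + ek))
    (heta'k : eta'k = (1 / 2 : ℚ) • (theta k - ek))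
    (L : ℕ) (lam : Fin (L + 1) → ℕ)
    (hanti : Antitone lam) (hpos : ∀ i, 0 < lam i)
    (hstrict : ∀ i j : Fin (L + 1), i < j → k < lam i → lam i ≠ lam j)
    (t : ℕ) (ht : t ≤ 2) (htype : t ≠ 0 ↔ ∃ i, lam i = k)
    (d : Fin (L + 1)) (hd : t ≠ 0 → (lam d = k ∧ ∀ i, i < d → k < lam i))
    (hhigh : ∀ i j : Fin (L + 1), i < j →
      2 * k + (j : ℕ) ≤ lam i + lam j + (i : ℕ)) :
    (k < lam (Fin.last L) →
      H k theta etak eta'k t d lam =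
        ((2 : ℚ) ^ (L + 1))⁻¹ • Q theta (fun i => (lam i : ℤ))) ∧
    (t = 1 →
      H k theta etak eta'k t d lam =
        ((2 : ℚ) ^ (L + 1))⁻¹ •
          (Q theta (fun i => (lam i : ℤ)) +
            ek * Q theta (fun i : Fin L => (lam (d.succAbove i) : ℤ)))) ∧
    (t = 2 →
      H k theta etak eta'k t d lam =
        ((2 : ℚ) ^ (L + 1))⁻¹ •
          (Q theta (fun i => (lam i : ℤ)) -
            ek * Q theta (fun i : Fin L => (lam (d.succAbove i) : ℤ)))) ∧
    (lam (Fin.last L) < k →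
      H k theta etak eta'k t d lam =
        ((2 : ℚ) ^ L)⁻¹ • Q theta (fun i => (lam i : ℤ))) :=
  stmt13_general R k theta hthneg ek etak eta'k hetak heta'k L lam hanti t htype d hd hhigh
end

section
/- Let N = 2n+2. For index sets P, Q ⊂ [1, 2n+2] define Q ⪯ P iff q_j ≤ p_j for all j and, whenever (Q,P) is critical, type(Q) = type(P). Then: (a) ⪯ is a partial order on index sets; (b) if ι is the involution exchanging n+1 and n+2 in index sets, then Q ⪯ P iff ι(Q) ⪯ ι(P); (c) Q ≤ P̄ iff Q ⪯ P or Q ⪯ ι(P), where P̄ replaces n+1 by n+2 in P and ≤ is the componentwise order. -/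
/-!
STATEMENT 18.  Let `N = 2n+2`.  Index sets (subsets of `[1, 2n+2]` of
cardinality `m` such that `i + j ≠ N+1 = 2n+3` for any two elements) are encoded
as strictly increasing functions `P : Fin m → ℕ`.  With `type`, `[P]`,
criticality, `ι` and `P̄` as in the paper, and
`Q ⪯ P ↔ (∀ j, q_j ≤ p_j) ∧ (critical (Q,P) → type Q = type P)`:
(a) `⪯` is a partial order on index sets; (b) `Q ⪯ P ↔ ι(Q) ⪯ ι(P)`;
(c) `Q ≤ P̄ ↔ (Q ⪯ P ∨ Q ⪯ ι(P))`.
-/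

namespace Stmt18

variable (n m : ℕ)

/-- `P` is an index set in `[1, 2n+2]`. -/
def IsIndexSet (P : Fin m → ℕ) : Prop :=
  StrictMono P ∧ (∀ j, 1 ≤ P j ∧ P j ≤ 2 * n + 2) ∧
    ∀ i j, P i + P j ≠ 2 * n + 3

/-- the type of an index set: `0` if `P ∩ {n+1, n+2} = ∅`, otherwise `1` plus
the parity of `#([1, n+1] ∖ P)`. -/
def typeOf (P : Fin m → ℕ) : ℕ :=
  if ∀ j, P j ≠ n + 1 ∧ P j ≠ n + 2 then 0
  else 1 + ((Finset.Icc 1 (n + 1)).filter fun x => ∀ j, P j ≠ x).card % 2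

/-- `[P] = P ∪ {N+1-p : p ∈ P}`. -/
def bracket (P : Fin m → ℕ) : Set ℕ :=
  {x | ∃ j, P j = x ∨ P j = 2 * n + 3 - x}

/-- `(Q, P)` is a critical pair. -/
def Critical (Q P : Fin m → ℕ) : Prop :=
  ∃ c : ℕ, c ≤ n + 1 ∧
    (∀ x : ℕ, c ≤ x → x ≤ n + 1 → (x ∈ bracket n m P ∧ x ∈ bracket n m Q)) ∧
    (Finset.univ.filter fun j => Q j < c).card =
      (Finset.univ.filter fun j => P j < c).card

/-- `Q ⪯ P`. -/
def Preceq (Q P : Fin m → ℕ) : Prop :=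
  (∀ j, Q j ≤ P j) ∧ (Critical n m Q P → typeOf n m Q = typeOf n m P)

/-- the involution `ι` exchanging `n+1` and `n+2`. -/
def iota (P : Fin m → ℕ) : Fin m → ℕ :=
  fun j => if P j = n + 1 then n + 2 else if P j = n + 2 then n + 1 else P j

/-- `P̄`: replace a value `n+1` by `n+2`. -/
def barOf (P : Fin m → ℕ) : Fin m → ℕ :=
  fun j => if P j = n + 1 then n + 2 else P j

end Stmt18

/-!
An index set meets `{n+1, n+2}` in at most one point, and `ι` moves that point across `n+1`,
which changes `#([1, n+1] ∖ P)` by one and hence exchanges the types `1` and `2`. This gives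
(b): the only way `ι` can break `Q ≤ P` is `q_j = n+1`, `p_j = n+2`, and then `(Q, P)` is
critical at `c = n+1` with different types. For transitivity in (a), criticality of `(Q, P)`
passes to `(Q, S)` and `(S, P)` when `Q ≤ S ≤ P`: for an index set, `[c, n+1] ⊂ [A]` says
exactly that `A` has `n+2-c` entries in `[c, N+1-c]`, and the number of entries below a bound
is antitone in `A`, so the counts of `S` are squeezed between the equal counts of `Q` and `P`.
For (c) we may assume `n+1 ∉ P` (otherwise `P̄ = ι(P)` and `n+1 ∉ ι(P)`). If `Q ≤ P` but
not `Q ⪯ P`, some `p_j = n+2`, and `q_j ≠ n+2` because the types differ; so `Q ≤ ι(P)`,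
and `type Q = type ι(P)` since both differ from `type P` in `{1, 2}`.
-/

namespace Stmt18

open Finset

variable {n m : ℕ}

section Counting

lemma card_filter_lt_eq_of_le_of_le {ι : Type*} [Fintype ι] {Q S P : ι → ℕ}
    (hQS : ∀ j, Q j ≤ S j) (hSP : ∀ j, S j ≤ P j) {c : ℕ}
    (h : #{j | Q j < c} = #{j | P j < c}) : #{j | S j < c} = #{j | P j < c} := by
  have hS : #{j | S j < c} ≤ #{j | Q j < c} :=
    card_le_card fun j => by simpa using fun hj => (hQS j).trans_lt hj
  have hP : #{j | P j < c} ≤ #{j | S j < c} :=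
    card_le_card fun j => by simpa using fun hj => (hSP j).trans_lt hj
  omega

lemma card_filter_lt_add_card_filter_Icc {ι : Type*} [Fintype ι] (A : ι → ℕ) {c d : ℕ}
    (hcd : c ≤ d + 1) : #{j | A j < c} + #{j | c ≤ A j ∧ A j ≤ d} = #{j | A j < d + 1} := by
  classical
  rw [← card_union_of_disjoint (disjoint_filter.2 fun j _ h h' => by omega)]
  congr 1
  ext j
  simp only [mem_union, mem_filter, mem_univ, true_and]
  omega

variable {A : Fin m → ℕ}

lemma card_filter_lt_apply (hA : StrictMono A) (j : Fin m) : #{i | A i < A j} = j := by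
  rw [← Fin.card_Iio j]
  congr 1
  ext i
  simp [hA.lt_iff_lt]

lemma card_filter_le_apply (hA : StrictMono A) (j : Fin m) : #{i | A i ≤ A j} = j + 1 := by
  rw [← Fin.card_Iic j]
  congr 1
  ext i
  simp [hA.le_iff_le]

end Counting

namespace IsIndexSet

variable {A : Fin m → ℕ}

lemma apply_ne_of_apply_eq (hA : IsIndexSet n m A) {i j : Fin m} (hi : A i = n + 1) :
    A j ≠ n + 2 := by
  have := hA.2.2 i j
  omega

lemma card_missing_add_card_filter_le (hA : IsIndexSet n m A) :
    #{x ∈ Icc 1 (n + 1) | ∀ j, A j ≠ x} + #{j | A j ≤ n + 1} = n + 1 := by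
  have himage : image A {j | A j ≤ n + 1} = {x ∈ Icc 1 (n + 1) | ¬∀ j, A j ≠ x} := by
    ext x
    simp only [mem_image, mem_filter, mem_univ, true_and, mem_Icc, not_forall, not_not]
    constructor
    · rintro ⟨j, hj, rfl⟩
      exact ⟨⟨(hA.2.1 j).1, hj⟩, j, rfl⟩
    · rintro ⟨⟨-, hx⟩, j, rfl⟩
      exact ⟨j, hx, rfl⟩
  rw [← card_image_of_injective _ hA.1.injective, himage, card_filter_add_card_filter_not,
    Nat.card_Icc, Nat.add_sub_cancel]

lemma typeOf_eq (hA : IsIndexSet n m A) {j : Fin m} (hj : A j = n + 1 ∨ A j = n + 2) :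
    typeOf n m A = 1 + (n + 1 + #{i | A i ≤ n + 1}) % 2 := by
  have hmissing := hA.card_missing_add_card_filter_le
  rw [typeOf, if_neg fun h => by have := h j; omega]
  omega

lemma typeOf_of_apply_eq_succ (hA : IsIndexSet n m A) {j : Fin m} (hj : A j = n + 1) :
    typeOf n m A = 1 + (n + j) % 2 := by
  have hcount := card_filter_le_apply hA.1 j
  rw [hj] at hcount
  rw [hA.typeOf_eq (Or.inl hj), hcount]
  omega

lemma typeOf_of_apply_eq_succ_succ (hA : IsIndexSet n m A) {j : Fin m} (hj : A j = n + 2) :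
    typeOf n m A = 1 + (n + j + 1) % 2 := by
  have hcount := card_filter_lt_apply hA.1 j
  have hle : #{i | A i ≤ n + 1} = #{i | A i < A j} := by
    congr 1
    ext i
    simp only [mem_filter, mem_univ, true_and]
    omega
  rw [hA.typeOf_eq (Or.inr hj), hle, hcount]
  omega

lemma iota (hA : IsIndexSet n m A) : IsIndexSet n m (iota n m A) := by
  refine ⟨fun i j hij => ?_, fun j => ?_, fun i j => ?_⟩
  · have h1 := hA.1 hij
    have h2 := hA.2.2 i j
    simp only [Stmt18.iota]
    split_ifs <;> omega
  · have := hA.2.1 j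
    simp only [Stmt18.iota]
    split_ifs <;> omega
  · have h1 := hA.2.2 i j
    have h2 := hA.2.2 i i
    have h3 := hA.2.2 j j
    simp only [Stmt18.iota]
    split_ifs <;> omega

lemma typeOf_iota_add (hA : IsIndexSet n m A) {j : Fin m} (hj : A j = n + 1 ∨ A j = n + 2) :
    typeOf n m (Stmt18.iota n m A) + typeOf n m A = 3 := by
  rcases hj with hj | hj
  · have hιj : Stmt18.iota n m A j = n + 2 := by simp [Stmt18.iota, hj]
    rw [hA.iota.typeOf_of_apply_eq_succ_succ hιj, hA.typeOf_of_apply_eq_succ hj]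
    omega
  · have hιj : Stmt18.iota n m A j = n + 1 := by simp [Stmt18.iota, hj]
    rw [hA.iota.typeOf_of_apply_eq_succ hιj, hA.typeOf_of_apply_eq_succ_succ hj]
    omega

lemma forall_mem_bracket_iff_card (hA : IsIndexSet n m A) (c : ℕ) :
    (∀ x, c ≤ x → x ≤ n + 1 → x ∈ bracket n m A) ↔
      #{j | c ≤ A j ∧ A j ≤ 2 * n + 3 - c} = n + 2 - c := by
  classical
  -- folding `x ↦ min x (N+1-x)` is injective on `A` (no two entries are mirror images) and
  -- maps its entries in `[c, N+1-c]` onto `[c, n+1] ∩ [A]`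
  have himage : image (fun j => min (A j) (2 * n + 3 - A j))
      {j | c ≤ A j ∧ A j ≤ 2 * n + 3 - c} = {x ∈ Icc c (n + 1) | x ∈ bracket n m A} := by
    ext x
    simp only [mem_image, mem_filter, mem_univ, true_and, mem_Icc]
    simp only [bracket, Set.mem_ofPred_eq]
    constructor
    · rintro ⟨j, hj, rfl⟩
      have := hA.2.1 j
      exact ⟨by omega, j, by omega⟩
    · rintro ⟨hx, j, hj⟩
      have := hA.2.1 j
      exact ⟨j, by omega, by omega⟩
  have hinj : Function.Injective fun j => min (A j) (2 * n + 3 - A j) := by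
    intro i j hij
    have := hA.2.2 i j
    have := hA.2.1 i
    have := hA.2.1 j
    exact hA.1.injective (by simp only at hij; omega)
  rw [← card_image_of_injective _ hinj, himage, ← Nat.card_Icc c (n + 1), card_filter_eq_iff]
  simp only [mem_Icc, and_imp]

lemma iota_apply_ne (hA : IsIndexSet n m A) {j : Fin m} (hj : A j = n + 1) (i : Fin m) :
    Stmt18.iota n m A i ≠ n + 1 := by
  have := hA.apply_ne_of_apply_eq (j := i) hj
  simp only [Stmt18.iota]
  split_ifs <;> omega

lemma barOf_eq_iota (hA : IsIndexSet n m A) {j : Fin m} (hj : A j = n + 1) :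
    barOf n m A = Stmt18.iota n m A := funext fun i => by
  have := hA.apply_ne_of_apply_eq (j := i) hj
  simp only [barOf, Stmt18.iota]
  split_ifs <;> omega

end IsIndexSet

lemma barOf_eq_self {A : Fin m → ℕ} (hA : ∀ j, A j ≠ n + 1) : barOf n m A = A :=
  funext fun j => if_neg (hA j)

lemma bracket_iota (A : Fin m → ℕ) : bracket n m (iota n m A) = bracket n m A := by
  ext x
  simp only [bracket, iota, Set.mem_ofPred_eq]
  refine exists_congr fun j => ?_
  split_ifs <;> omega

lemma iota_iota (A : Fin m → ℕ) : iota n m (iota n m A) = A := by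
  funext j
  simp only [iota]
  split_ifs <;> omega

section Critical

variable {Q S P : Fin m → ℕ}

lemma Critical.exists_left (h : Critical n m Q P) : ∃ j, Q j = n + 1 ∨ Q j = n + 2 := by
  obtain ⟨c, hc, hbr, -⟩ := h
  obtain ⟨j, hj⟩ := (hbr (n + 1) hc le_rfl).2
  exact ⟨j, by omega⟩

lemma Critical.exists_right (h : Critical n m Q P) : ∃ j, P j = n + 1 ∨ P j = n + 2 := by
  obtain ⟨c, hc, hbr, -⟩ := h
  obtain ⟨j, hj⟩ := (hbr (n + 1) hc le_rfl).1
  exact ⟨j, by omega⟩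

lemma critical_of_apply_eq (hQ : StrictMono Q) (hP : IsIndexSet n m P) {j : Fin m}
    (hQj : Q j = n + 1) (hPj : P j = n + 2) : Critical n m Q P := by
  refine ⟨n + 1, le_rfl, fun x h1 h2 => ?_, ?_⟩
  · obtain rfl : x = n + 1 := le_antisymm h2 h1
    exact ⟨⟨j, Or.inr (by omega)⟩, ⟨j, Or.inl hQj⟩⟩
  · have hbelow : #{i | P i < n + 1} = #{i | P i < P j} := by
      congr 1
      ext i
      have := hP.apply_ne_of_apply_eq (j := j) (i := i)
      simp only [mem_filter, mem_univ, true_and]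
      omega
    rw [hbelow, ← hQj, card_filter_lt_apply hQ, card_filter_lt_apply hP.1]

lemma Critical.of_le_of_le (hQ : IsIndexSet n m Q) (hS : IsIndexSet n m S)
    (hP : IsIndexSet n m P) (hQS : ∀ j, Q j ≤ S j) (hSP : ∀ j, S j ≤ P j)
    (h : Critical n m Q P) : Critical n m Q S ∧ Critical n m S P := by
  obtain ⟨c, hc, hbr, hcnt⟩ := h
  have hmidP := (hP.forall_mem_bracket_iff_card c).1 fun x h1 h2 => (hbr x h1 h2).1
  have hmidQ := (hQ.forall_mem_bracket_iff_card c).1 fun x h1 h2 => (hbr x h1 h2).2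
  have hsplit := fun A : Fin m → ℕ =>
    card_filter_lt_add_card_filter_Icc A (c := c) (d := 2 * n + 3 - c) (by omega)
  have hlow := card_filter_lt_eq_of_le_of_le hQS hSP hcnt
  have hhigh := card_filter_lt_eq_of_le_of_le hQS hSP (c := 2 * n + 3 - c + 1)
    (by rw [← hsplit Q, ← hsplit P]; omega)
  have hbrS := (hS.forall_mem_bracket_iff_card c).2 (by have := hsplit S; have := hsplit P; omega)
  exact ⟨⟨c, hc, fun x h1 h2 => ⟨hbrS x h1 h2, (hbr x h1 h2).2⟩, by omega⟩,
    ⟨c, hc, fun x h1 h2 => ⟨(hbr x h1 h2).1, hbrS x h1 h2⟩, hlow⟩⟩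

lemma card_filter_iota_lt {c : ℕ} (hc : c ≤ n + 1) (A : Fin m → ℕ) :
    #{j | iota n m A j < c} = #{j | A j < c} := by
  congr 1
  ext j
  simp only [mem_filter, mem_univ, true_and]
  simp only [iota]
  split_ifs <;> omega

lemma critical_iota_iff : Critical n m (iota n m Q) (iota n m P) ↔ Critical n m Q P := by
  simp only [Critical, bracket_iota]
  refine exists_congr fun c => and_congr_right fun hc => ?_
  rw [card_filter_iota_lt hc, card_filter_iota_lt hc]

lemma Critical.typeOf_iota_eq_iff (hQ : IsIndexSet n m Q) (hP : IsIndexSet n m P)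
    (h : Critical n m Q P) :
    typeOf n m (iota n m Q) = typeOf n m (iota n m P) ↔ typeOf n m Q = typeOf n m P := by
  obtain ⟨i, hi⟩ := h.exists_left
  obtain ⟨j, hj⟩ := h.exists_right
  have := hQ.typeOf_iota_add hi
  have := hP.typeOf_iota_add hj
  omega

end Critical

namespace Preceq

variable {Q S P : Fin m → ℕ}

lemma refl (P : Fin m → ℕ) : Preceq n m P P :=
  ⟨fun _ => le_rfl, fun _ => rfl⟩

lemma antisymm (hQP : Preceq n m Q P) (hPQ : Preceq n m P Q) : Q = P :=
  funext fun j => le_antisymm (hQP.1 j) (hPQ.1 j)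

lemma trans (hQ : IsIndexSet n m Q) (hS : IsIndexSet n m S) (hP : IsIndexSet n m P)
    (hQS : Preceq n m Q S) (hSP : Preceq n m S P) : Preceq n m Q P := by
  refine ⟨fun j => (hQS.1 j).trans (hSP.1 j), fun h => ?_⟩
  obtain ⟨h₁, h₂⟩ := h.of_le_of_le hQ hS hP hQS.1 hSP.1
  exact (hQS.2 h₁).trans (hSP.2 h₂)

lemma map_iota (hQ : IsIndexSet n m Q) (hP : IsIndexSet n m P) (h : Preceq n m Q P) :
    Preceq n m (iota n m Q) (iota n m P) := by
  refine ⟨fun j => ?_, fun hc => ?_⟩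
  · by_cases hj : Q j = n + 1 ∧ P j = n + 2
    · have htype := h.2 (critical_of_apply_eq hQ.1 hP hj.1 hj.2)
      rw [hQ.typeOf_of_apply_eq_succ hj.1, hP.typeOf_of_apply_eq_succ_succ hj.2] at htype
      omega
    · have := h.1 j
      simp only [iota]
      split_ifs <;> omega
  · have hc' := critical_iota_iff.1 hc
    exact (hc'.typeOf_iota_eq_iff hQ hP).2 (h.2 hc')

end Preceq

lemma preceq_iota_iff {Q P : Fin m → ℕ} (hQ : IsIndexSet n m Q) (hP : IsIndexSet n m P) :
    Preceq n m (iota n m Q) (iota n m P) ↔ Preceq n m Q P := by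
  refine ⟨fun h => ?_, Preceq.map_iota hQ hP⟩
  simpa only [iota_iota] using h.map_iota hQ.iota hP.iota

lemma forall_le_iff_preceq_or_preceq_iota {Q P : Fin m → ℕ} (hQ : IsIndexSet n m Q)
    (hP : IsIndexSet n m P) (hP₁ : ∀ j, P j ≠ n + 1) :
    (∀ j, Q j ≤ P j) ↔ Preceq n m Q P ∨ Preceq n m Q (iota n m P) := by
  refine ⟨fun hle => ?_, ?_⟩
  · by_cases hQP : Preceq n m Q P
    · exact Or.inl hQP
    obtain ⟨hcrit, htype⟩ : Critical n m Q P ∧ typeOf n m Q ≠ typeOf n m P := by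
      simpa [Preceq, hle] using hQP
    obtain ⟨i, hi⟩ := hcrit.exists_left
    obtain ⟨j, hj⟩ := hcrit.exists_right
    replace hj : P j = n + 2 := by have := hP₁ j; omega
    have hιj : iota n m P j = n + 1 := by simp [iota, hj]
    have hQj : Q j ≠ n + 2 := fun hQj => htype <| by
      rw [hQ.typeOf_of_apply_eq_succ_succ hQj, hP.typeOf_of_apply_eq_succ_succ hj]
    refine Or.inr ⟨fun k => ?_, fun _ => ?_⟩
    · have := hle k
      rcases eq_or_ne k j with rfl | hk
      · omega
      · have := hP.1.injective.ne hk
        simp only [iota]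
        split_ifs <;> omega
    · rw [hQ.typeOf_eq hi, hP.typeOf_of_apply_eq_succ_succ hj] at htype
      rw [hQ.typeOf_eq hi, hP.iota.typeOf_of_apply_eq_succ hιj]
      omega
  · rintro (h | h) j
    · exact h.1 j
    · have hQP := h.1 j
      have hPj := hP₁ j
      simp only [iota] at hQP
      split_ifs at hQP <;> omega

end Stmt18

open Stmt18 in
theorem stmt18 (n m : ℕ) :
    -- (a) `⪯` is a partial order on index sets
    ((∀ P : Fin m → ℕ, IsIndexSet n m P → Preceq n m P P) ∧
     (∀ P Q : Fin m → ℕ, IsIndexSet n m P → IsIndexSet n m Q →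
        Preceq n m Q P → Preceq n m P Q → P = Q) ∧
     (∀ P Q S : Fin m → ℕ, IsIndexSet n m P → IsIndexSet n m Q → IsIndexSet n m S →
        Preceq n m Q S → Preceq n m S P → Preceq n m Q P)) ∧
    -- (b) compatibility with the involution `ι`
    (∀ P Q : Fin m → ℕ, IsIndexSet n m P → IsIndexSet n m Q →
      (Preceq n m Q P ↔ Preceq n m (iota n m Q) (iota n m P))) ∧
    -- (c) `Q ≤ P̄ ↔ Q ⪯ P ∨ Q ⪯ ι(P)`
    (∀ P Q : Fin m → ℕ, IsIndexSet n m P → IsIndexSet n m Q →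
      ((∀ j, Q j ≤ barOf n m P j) ↔ (Preceq n m Q P ∨ Preceq n m Q (iota n m P)))) := by
  refine ⟨⟨fun P _ => Preceq.refl P, fun P Q _ _ hQP hPQ => (hQP.antisymm hPQ).symm,
    fun P Q S hP hQ hS => Preceq.trans hQ hS hP⟩,
    fun P Q hP hQ => (preceq_iota_iff hQ hP).symm, fun P Q hP hQ => ?_⟩
  by_cases hP₁ : ∃ j₀, P j₀ = n + 1
  · obtain ⟨j₀, hj₀⟩ := hP₁
    rw [hP.barOf_eq_iota hj₀, forall_le_iff_preceq_or_preceq_iota hQ hP.iota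
      (hP.iota_apply_ne hj₀), iota_iota, or_comm]
  · simp only [not_exists] at hP₁
    rw [barOf_eq_self hP₁]
    exact forall_le_iff_preceq_or_preceq_iota hQ hP hP₁
end

section
/- Let λ be a k-strict partition contained in an m × (n+k) rectangle and μ a k-strict partition with λ → μ (parameter K = 2k). Define 𝔸̂ = 𝔸 ∪ {[m', k]} if λ_{m'} = k < μ_{m'} (where m' = ℓ_k(λ) + 1), and 𝔸̂ = 𝔸 otherwise. Then N̂(λ, μ), defined as N(λ,μ)+1 if λ has positive type and μ does not and N(λ,μ) otherwise, equals the number of distinguished boxes B ∈ 𝔸̂ that are rightmost distinguished boxes in their connected component (a box is distinguished if the box directly to its left is not in 𝔸̂). -/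
/-!
STATEMENT 19.  Let `K = 2k` (`k ≥ 1`), let `λ` be a `k`-strict partition
contained in an `m × (n+k)` rectangle and `μ` a `k`-strict partition with
`λ → μ`.  Let `m' = ℓ_k(λ) + 1` and let `𝔸̂ = 𝔸 ∪ {[m',k]}` if
`λ_{m'} = k < μ_{m'}`, `𝔸̂ = 𝔸` otherwise.  Then
`N̂(λ,μ)` (which is `N(λ,μ)+1` if `λ` has positive type and `μ` does not, and
`N(λ,μ)` otherwise) equals the number of boxes of `𝔸̂` that are distinguished
(no box of `𝔸̂` directly to their left) and optional (rightmost distinguished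
box in their connected component).  Conventions as in Statement 17.
-/

namespace Stmt19

def IsPartition (f : ℕ → ℕ) : Prop :=
  (∀ i j : ℕ, 1 ≤ i → i ≤ j → f j ≤ f i) ∧ ∃ M : ℕ, ∀ i : ℕ, M ≤ i → f i = 0

def IsKStrict (k : ℕ) (f : ℕ → ℕ) : Prop :=
  ∀ i j : ℕ, 1 ≤ i → i < j → k < f i → f i ≠ f j

def diagram (f : ℕ → ℕ) : Set (ℕ × ℕ) :=
  {b | 1 ≤ b.1 ∧ 1 ≤ b.2 ∧ b.2 ≤ f b.1}

noncomputable def size (f : ℕ → ℕ) : ℕ := (diagram f).ncard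

noncomputable def colLen (f : ℕ → ℕ) (c : ℕ) : ℕ :=
  {r : ℕ | 1 ≤ r ∧ c ≤ f r}.ncard

def Krel (k K : ℕ) (b b' : ℕ × ℕ) : Prop :=
  b.2 ≤ k ∧ k < b'.2 ∧ b.2 + b'.2 + b'.1 = K + 1 + b.1

def PieriArrow (k K : ℕ) (lam mu : ℕ → ℕ) : Prop :=
  (∃ nu : ℕ → ℕ, IsPartition nu ∧
    (∀ r : ℕ, 1 ≤ r → nu r ≤ lam r ∧ lam r ≤ nu r + 1 ∧ (nu r < lam r → lam r ≤ k)) ∧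
    (∀ r : ℕ, 1 ≤ r → nu r ≤ mu r ∧ mu (r + 1) ≤ nu r)) ∧
  (∀ c : ℕ, 1 ≤ c → c ≤ k → 0 < colLen lam c → colLen mu c = colLen lam c →
    {b : ℕ × ℕ | b ∈ diagram mu \ diagram lam ∧
      Krel k K (colLen lam c, c) b}.ncard ≤ 1) ∧
  (∀ c : ℕ, 1 ≤ c → c ≤ k → colLen mu c < colLen lam c →
    ∃ R : ℕ,
      (∀ b : ℕ × ℕ, b ∈ diagram lam \ diagram mu → b.2 = c →
        (∃! b' : ℕ × ℕ, b' ∈ diagram mu \ diagram lam ∧ Krel k K b b') ∧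
        (∀ b' : ℕ × ℕ, b' ∈ diagram mu \ diagram lam → Krel k K b b' → b'.1 = R)) ∧
      ((∃! b' : ℕ × ℕ, b' ∈ diagram mu \ diagram lam ∧
          Krel k K (colLen mu c, c) b') ∧
        (∀ b' : ℕ × ℕ, b' ∈ diagram mu \ diagram lam →
          Krel k K (colLen mu c, c) b' → b'.1 = R)))

def Mentioned (k K : ℕ) (lam mu : ℕ → ℕ) (b : ℕ × ℕ) : Prop :=
  ∃ c : ℕ, 1 ≤ c ∧ c ≤ k ∧
    ((colLen mu c = colLen lam c ∧ 0 < colLen lam c ∧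
        Krel k K (colLen lam c, c) b) ∨
      (colLen mu c < colLen lam c ∧
        (Krel k K (colLen mu c, c) b ∨
          ∃ r : ℕ, (r, c) ∈ diagram lam \ diagram mu ∧ Krel k K (r, c) b)))

def Aset (k K : ℕ) (lam mu : ℕ → ℕ) : Set (ℕ × ℕ) :=
  {b | b ∈ diagram mu \ diagram lam ∧ k < b.2 ∧ ¬ Mentioned k K lam mu b}

def Near (b b' : ℕ × ℕ) : Prop :=
  b.1 ≤ b'.1 + 1 ∧ b'.1 ≤ b.1 + 1 ∧ b.2 ≤ b'.2 + 1 ∧ b'.2 ≤ b.2 + 1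

noncomputable def Ncomp (k K : ℕ) (lam mu : ℕ → ℕ) : ℕ :=
  Nat.card (Quot fun a b : Aset k K lam mu => Near a.1 b.1)

/-- `λ` has positive type: some part equals `k`. -/
def PosType (k : ℕ) (f : ℕ → ℕ) : Prop := ∃ r : ℕ, 1 ≤ r ∧ f r = k

/-- `N̂(λ,μ)`: `N(λ,μ)+1` if `λ` has positive type and `μ` does not, and
`N(λ,μ)` otherwise. -/
noncomputable def Nhat (k K : ℕ) (lam mu : ℕ → ℕ) : ℕ :=
  letI : Decidable (PosType k lam ∧ ¬ PosType k mu) :=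
    Classical.propDecidable _
  Ncomp k K lam mu + (if PosType k lam ∧ ¬ PosType k mu then 1 else 0)

/-- `m' = ℓ_k(λ) + 1`, the first row of `λ` with `λ_{m'} ≤ k`. -/
noncomputable def mrow (k : ℕ) (lam : ℕ → ℕ) : ℕ :=
  {i : ℕ | 1 ≤ i ∧ k < lam i}.ncard + 1

/-- the augmented set `𝔸̂`. -/
def Ahat (k K : ℕ) (lam mu : ℕ → ℕ) : Set (ℕ × ℕ) :=
  Aset k K lam mu ∪
    {b | lam (mrow k lam) = k ∧ k < mu (mrow k lam) ∧ b = (mrow k lam, k)}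

/-- `b` is a distinguished box of `𝔸̂`: the box directly to its left does not
lie in `𝔸̂`. -/
def Distinguished (k K : ℕ) (lam mu : ℕ → ℕ) (b : ℕ × ℕ) : Prop :=
  b ∈ Ahat k K lam mu ∧ (b.1, b.2 - 1) ∉ Ahat k K lam mu

/-- connectivity within `𝔸̂`. -/
def Conn (k K : ℕ) (lam mu : ℕ → ℕ) (b b' : ℕ × ℕ) : Prop :=
  Relation.ReflTransGen
    (fun x y => x ∈ Ahat k K lam mu ∧ y ∈ Ahat k K lam mu ∧ Near x y) b b'

/-- `b` is an optional distinguished box: it is the rightmost distinguished box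
in its connected component of `𝔸̂`. -/
def Optional (k K : ℕ) (lam mu : ℕ → ℕ) (b : ℕ × ℕ) : Prop :=
  Distinguished k K lam mu b ∧
    ∀ b' : ℕ × ℕ, Conn k K lam mu b b' → Distinguished k K lam mu b' →
      b'.2 ≤ b.2

end Stmt19

/-!
The boxes of `𝔸̂` lie in the horizontal strip `μ ∖ λ` (plus possibly `[m', k]`), so `𝔸̂` has at
most one box in each column. Hence every connected component of `𝔸̂` contains exactly one
optional box, and the optional boxes count the components of `𝔸̂`.

It remains to compare the components of `𝔸̂` and `𝔸`. If `[m', k]` is not added, then `λ` of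
positive type forces `μ` of positive type: otherwise column `k` shrinks and Pieri condition (2)
produces a box of `μ ∖ λ` that lies inside `λ`, because the parts of `λ` above `k` decrease
strictly. If `[m', k]` is added, its only possible neighbour in `𝔸` is `[m', k+1]`, which lies in
`𝔸` exactly when `μ` has positive type; so `[m', k]` either joins a component of `𝔸` or forms a
new one, matching the correction term of `N̂`.
-/

namespace Stmt19

section Components

variable {α : Type*} (r : α → α → Prop) (S : Set α)

abbrev Components : Type _ := Quot fun a b : S => r a.1 b.1

def Linked : α → α → Prop := Relation.ReflTransGen fun x y => x ∈ S ∧ y ∈ S ∧ r x y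

variable {r S}

theorem linked_iff_reflTransGen {a b : S} :
    Linked r S a b ↔ Relation.ReflTransGen (fun a b : S => r a.1 b.1) a b := by
  constructor
  · have key : ∀ x, Linked r S x b → ∀ hx : x ∈ S,
        Relation.ReflTransGen (fun a b : S => r a.1 b.1) ⟨x, hx⟩ b := by
      intro x h
      induction h using Relation.ReflTransGen.head_induction_on with
      | refl => exact fun _ => .refl
      | head hxy _ ih => exact fun _ => .head hxy.2.2 (ih hxy.2.1)
    exact fun h => key a h a.2
  · exact fun h => Relation.ReflTransGen.lift (p := fun x y => x ∈ S ∧ y ∈ S ∧ r x y)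
      Subtype.val (fun x y hxy => ⟨x.2, y.2, hxy⟩) _ _ h

theorem Linked.mem_right {a b : α} (hab : Linked r S a b) (ha : a ∈ S) : b ∈ S :=
  (Relation.ReflTransGen.cases_tail hab).elim (· ▸ ha) fun ⟨_, _, h⟩ => h.2.1

theorem components_mk_eq_iff_linked [Std.Symm r] {a b : S} :
    (Quot.mk _ a : Components r S) = Quot.mk _ b ↔ Linked r S a b := by
  have : Std.Symm fun a b : S => r a.1 b.1 := ⟨fun _ _ h => Std.Symm.symm _ _ h⟩
  rw [Quot.eq, Relation.EqvGen.eqvGen_eq_reflTransGen, linked_iff_reflTransGen]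

theorem card_components_insert_of_isolated [Std.Symm r] [Finite S] {B : α} (hB : B ∉ S)
    (hiso : ∀ x ∈ S, ¬ r B x) :
    Nat.card (Components r (insert B S)) = Nat.card (Components r S) + 1 := by
  classical
  let toOption (x : (insert B S : Set α)) : Option (Components r S) :=
    if hx : x.1 ∈ S then some (Quot.mk _ ⟨x, hx⟩) else none
  have resp : ∀ x y : (insert B S : Set α), r x y → toOption x = toOption y := by
    rintro ⟨x, rfl | hx⟩ ⟨y, rfl | hy⟩ hxy
    · rfl
    · exact absurd hxy (hiso y hy)
    · exact absurd (Std.Symm.symm _ _ hxy) (hiso x hx)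
    · simp only [toOption, dif_pos hx, dif_pos hy, Option.some.injEq]
      exact Quot.sound hxy
  let e : Components r (insert B S) ≃ Option (Components r S) :=
    { toFun := Quot.lift toOption resp
      invFun := fun o => o.elim (Quot.mk _ ⟨B, Set.mem_insert B S⟩)
        (Quot.map (Set.inclusion (Set.subset_insert B S)) fun _ _ h => h)
      left_inv := by
        rintro ⟨x, rfl | hx⟩
        · simp [toOption, hB]
        · simp only [toOption, dif_pos hx]
          rfl
      right_inv := by
        rintro (_ | ⟨⟨x⟩⟩)
        · simp [toOption, hB]
        · exact dif_pos x.2 }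
  rw [Nat.card_congr e, Finite.card_option]

theorem card_components_insert_of_unique_adj [Std.Symm r] {B c : α} (hB : B ∉ S)
    (hc : c ∈ S) (hBc : r B c) (hunique : ∀ x ∈ S, r B x → x = c) :
    Nat.card (Components r (insert B S)) = Nat.card (Components r S) := by
  classical
  let retract (x : (insert B S : Set α)) : S := if hx : x.1 ∈ S then ⟨x, hx⟩ else ⟨c, hc⟩
  have resp : ∀ x y : (insert B S : Set α), r x y →
      (Quot.mk _ (retract x) : Components r S) = Quot.mk _ (retract y) := by
    rintro ⟨x, rfl | hx⟩ ⟨y, rfl | hy⟩ hxy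
    · rfl
    · simp only [retract, dif_neg hB, hunique y hy hxy, dif_pos hc]
    · simp only [retract, dif_neg hB, hunique x hx (Std.Symm.symm _ _ hxy), dif_pos hc]
    · simp only [retract, dif_pos hx, dif_pos hy]
      exact Quot.sound hxy
  let e : Components r (insert B S) ≃ Components r S :=
    { toFun := Quot.lift (fun x => Quot.mk _ (retract x)) resp
      invFun := Quot.map (Set.inclusion (Set.subset_insert B S)) fun _ _ h => h
      left_inv := by
        rintro ⟨x, rfl | hx⟩
        · simp only [retract, dif_neg hB]
          exact Quot.sound (Std.Symm.symm _ _ hBc)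
        · simp only [retract, dif_pos hx]
          rfl
      right_inv := by
        rintro ⟨x⟩
        exact congrArg _ (dif_pos x.2) }
  exact Nat.card_congr e

end Components

section Boxes

instance : Std.Symm Near := ⟨fun _ _ ⟨h₁, h₂, h₃, h₄⟩ => ⟨h₂, h₁, h₄, h₃⟩⟩

def DistinguishedIn (S : Set (ℕ × ℕ)) (b : ℕ × ℕ) : Prop :=
  b ∈ S ∧ (b.1, b.2 - 1) ∉ S

def OptionalIn (S : Set (ℕ × ℕ)) (b : ℕ × ℕ) : Prop :=
  DistinguishedIn S b ∧ ∀ b', Linked Near S b b' → DistinguishedIn S b' → b'.2 ≤ b.2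

variable {S : Set (ℕ × ℕ)}

theorem exists_optionalIn_linked (hfin : S.Finite) (hpos : ∀ b ∈ S, 1 ≤ b.2)
    {a : ℕ × ℕ} (ha : a ∈ S) : ∃ y, OptionalIn S y ∧ Linked Near S a y := by
  let T := {x | Linked Near S a x}
  have hTS : T ⊆ S := fun x hx => hx.mem_right ha
  have hTfin : T.Finite := hfin.subset hTS
  obtain ⟨x, hxT, hxmin⟩ := Set.exists_min_image T Prod.snd hTfin ⟨a, .refl⟩
  -- the leftmost box of a component is distinguished: its left neighbour would be linked to it
  have hx : DistinguishedIn S x := by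
    refine ⟨hTS hxT, fun hleft => ?_⟩
    have hnear : Near x (x.1, x.2 - 1) := by unfold Near; omega
    have := hxmin _ (Relation.ReflTransGen.tail hxT ⟨hTS hxT, hleft, hnear⟩)
    have := hpos x (hTS hxT)
    dsimp only at *
    omega
  obtain ⟨y, ⟨hyT, hy⟩, hymax⟩ := Set.exists_max_image {x | x ∈ T ∧ DistinguishedIn S x}
    Prod.snd (hTfin.subset fun _ h => h.1) ⟨x, hxT, hx⟩
  exact ⟨y, ⟨hy, fun b hyb hb => hymax b ⟨hyT.trans hyb, hb⟩⟩, hyT⟩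

theorem card_components_eq_ncard_optionalIn (hfin : S.Finite) (hcol : Set.InjOn Prod.snd S)
    (hpos : ∀ b ∈ S, 1 ≤ b.2) :
    Nat.card (Components Near S) = {b | OptionalIn S b}.ncard := by
  let f : {b | OptionalIn S b} → Components Near S := fun b => Quot.mk _ ⟨b, b.2.1.1⟩
  have hinj : f.Injective := by
    rintro ⟨b, hb⟩ ⟨b', hb'⟩ hbb'
    have h := components_mk_eq_iff_linked.1 hbb'
    have h' := components_mk_eq_iff_linked.1 hbb'.symm
    exact Subtype.ext (hcol hb.1.1 hb'.1.1 (le_antisymm (hb'.2 b h' hb.1) (hb.2 b' h hb'.1)))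
  have hsurj : f.Surjective := by
    rintro ⟨a⟩
    obtain ⟨y, hy, hay⟩ := exists_optionalIn_linked hfin hpos a.2
    exact ⟨⟨y, hy⟩, (components_mk_eq_iff_linked.2 hay).symm⟩
  rw [← Nat.card_coe_set_eq]
  exact (Nat.card_eq_of_bijective f ⟨hinj, hsurj⟩).symm

end Boxes

section Partitions

variable {f : ℕ → ℕ}

theorem exists_setOf_le_apply_eq_Icc (hf : IsPartition f) {c : ℕ} (hc : 1 ≤ c) :
    ∃ L, {r | 1 ≤ r ∧ c ≤ f r} = Set.Icc 1 L := by
  obtain ⟨M, hM⟩ := hf.2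
  refine ⟨Nat.findGreatest (fun r => c ≤ f r) M, Set.ext fun r => ⟨?_, ?_⟩⟩
  · rintro ⟨hr, hcr⟩
    refine ⟨hr, Nat.le_findGreatest ?_ hcr⟩
    by_contra h
    have := hM r (by omega)
    omega
  · rintro ⟨hr, hrL⟩
    have hL : c ≤ f (Nat.findGreatest (fun r => c ≤ f r) M) :=
      Nat.findGreatest_of_ne_zero (P := fun r => c ≤ f r) rfl (by omega)
    exact ⟨hr, hL.trans (hf.1 r _ hr hrL)⟩

theorem le_colLen_iff (hf : IsPartition f) {c r : ℕ} (hc : 1 ≤ c) (hr : 1 ≤ r) :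
    r ≤ colLen f c ↔ c ≤ f r := by
  obtain ⟨L, hL⟩ := exists_setOf_le_apply_eq_Icc hf hc
  have hmem : 1 ≤ r ∧ c ≤ f r ↔ 1 ≤ r ∧ r ≤ L := Set.ext_iff.1 hL r
  rw [colLen, hL, Set.ncard_Icc_nat]
  omega

theorem diagram_finite (hf : IsPartition f) : (diagram f).Finite := by
  obtain ⟨M, hM⟩ := hf.2
  refine ((Set.finite_Icc 1 M).prod (Set.finite_Icc 1 (f 1))).subset ?_
  rintro ⟨r, c⟩ ⟨h1, h2, h3⟩
  dsimp only at h1 h2 h3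
  have hfr : f r ≤ f 1 := hf.1 1 r le_rfl h1
  refine ⟨⟨h1, ?_⟩, h2, by omega⟩
  by_contra h
  have := hM r (by omega)
  omega

theorem injOn_snd_diagram_diff {lam mu : ℕ → ℕ} (hlam : IsPartition lam)
    (hskew : ∀ r, 1 ≤ r → mu (r + 1) ≤ lam r) :
    Set.InjOn Prod.snd (diagram mu \ diagram lam) := by
  have below : ∀ a ∈ diagram mu \ diagram lam, ∀ b ∈ diagram mu \ diagram lam,
      a.1 < b.1 → a.2 ≠ b.2 := by
    rintro ⟨r, c⟩ ⟨⟨hr, hc, -⟩, hnot⟩ ⟨r', c'⟩ ⟨⟨-, -, hc'⟩, -⟩ hrr' rfl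
    dsimp only at *
    have h1 : mu (r' - 1 + 1) ≤ lam (r' - 1) := hskew (r' - 1) (by omega)
    have h2 : lam (r' - 1) ≤ lam r := hlam.1 r (r' - 1) hr (by omega)
    rw [Nat.sub_add_cancel (by omega)] at h1
    exact hnot ⟨hr, hc, by dsimp only; omega⟩
  intro a ha b hb hab
  rcases lt_trichotomy a.1 b.1 with h | h | h
  · exact absurd hab (below a ha b hb h)
  · exact Prod.ext h hab
  · exact absurd hab.symm (below b hb a ha h)

end Partitions

section Mrow

variable {k : ℕ} {lam : ℕ → ℕ}

theorem one_le_mrow : 1 ≤ mrow k lam := Nat.le_add_left 1 _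

theorem lt_mrow_iff (hlam : IsPartition lam) {r : ℕ} (hr : 1 ≤ r) :
    r < mrow k lam ↔ k < lam r := by
  have hmrow : mrow k lam = colLen lam (k + 1) + 1 := by
    simp only [mrow, colLen, Nat.succ_le_iff]
  rw [hmrow, Nat.lt_succ_iff, le_colLen_iff hlam (Nat.le_add_left 1 k) hr, Nat.succ_le_iff]

theorem apply_mrow_le (hlam : IsPartition lam) : lam (mrow k lam) ≤ k :=
  not_lt.1 fun h => (lt_irrefl _) ((lt_mrow_iff hlam one_le_mrow).2 h)

theorem mrow_add_le_apply_add (hlam : IsPartition lam) (hlamk : IsKStrict k lam) {r : ℕ}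
    (hr : 1 ≤ r) (hrm : r < mrow k lam) : k + mrow k lam ≤ lam r + r := by
  obtain ⟨d, hd⟩ : ∃ d, mrow k lam = r + d + 1 := ⟨mrow k lam - r - 1, by omega⟩
  induction d generalizing r with
  | zero =>
    have := (lt_mrow_iff hlam hr).1 hrm
    omega
  | succ d ih =>
    have h1 := ih (r := r + 1) (by omega) (by omega) (by omega)
    have h2 : k < lam r := (lt_mrow_iff hlam hr).1 hrm
    have h3 : lam r ≠ lam (r + 1) := hlamk r (r + 1) hr (by omega) h2
    have h4 : lam (r + 1) ≤ lam r := hlam.1 r (r + 1) hr (by omega)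
    omega

end Mrow

section Pieri

variable {k K : ℕ} {lam mu : ℕ → ℕ}

theorem PieriArrow.le_apply_of_lt (harrow : PieriArrow k K lam mu) {r : ℕ} (hr : 1 ≤ r)
    (hkr : k < lam r) : lam r ≤ mu r := by
  obtain ⟨⟨nu, -, hnulam, hnumu⟩, -, -⟩ := harrow
  obtain ⟨-, h1, h2⟩ := hnulam r hr
  have := (hnumu r hr).1
  by_cases h : nu r < lam r
  · exact absurd (h2 h) (not_le.2 hkr)
  · omega

theorem PieriArrow.apply_succ_le (harrow : PieriArrow k K lam mu) {r : ℕ} (hr : 1 ≤ r) :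
    mu (r + 1) ≤ lam r := by
  obtain ⟨⟨nu, -, hnulam, hnumu⟩, -, -⟩ := harrow
  exact (hnumu r hr).2.trans (hnulam r hr).1

theorem PieriArrow.lt_apply_of_le_mrow (hlam : IsPartition lam)
    (harrow : PieriArrow k K lam mu) (hm : k < mu (mrow k lam)) {r : ℕ} (hr : 1 ≤ r)
    (hrm : r ≤ mrow k lam) : k < mu r := by
  rcases hrm.lt_or_eq with h | rfl
  · have hkr := (lt_mrow_iff hlam hr).1 h
    exact hkr.trans_le (harrow.le_apply_of_lt hr hkr)
  · exact hm

theorem PieriArrow.injOn_snd_diagram_diff (hlam : IsPartition lam)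
    (harrow : PieriArrow k K lam mu) : Set.InjOn Prod.snd (diagram mu \ diagram lam) :=
  Stmt19.injOn_snd_diagram_diff hlam fun _ hr => harrow.apply_succ_le hr

theorem PieriArrow.posType_iff (hlam : IsPartition lam) (hmu : IsPartition mu)
    (harrow : PieriArrow k K lam mu) (h1 : lam (mrow k lam) = k) (h2 : k < mu (mrow k lam)) :
    PosType k mu ↔ mu (mrow k lam + 1) = k := by
  refine ⟨fun ⟨r, hr, hrk⟩ => ?_, fun h => ⟨_, Nat.le_add_left 1 _, h⟩⟩
  have hr' : mrow k lam + 1 ≤ r := by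
    by_contra h
    have := harrow.lt_apply_of_le_mrow hlam h2 hr (by omega)
    omega
  have := hmu.1 _ r (Nat.le_add_left 1 _) hr'
  have := harrow.apply_succ_le (one_le_mrow (k := k) (lam := lam))
  omega

theorem mrow_succ_mem_diagram_diff (h1 : lam (mrow k lam) = k) (h2 : k < mu (mrow k lam)) :
    (mrow k lam, k + 1) ∈ diagram mu \ diagram lam :=
  ⟨⟨one_le_mrow, Nat.le_add_left 1 k, h2⟩, fun h => by
    have := h.2.2
    dsimp only at this
    omega⟩

theorem PieriArrow.mentioned_mrow_iff (hk : 1 ≤ k) (hlam : IsPartition lam)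
    (hmu : IsPartition mu) (harrow : PieriArrow k (2 * k) lam mu)
    (h1 : lam (mrow k lam) = k) (h2 : k < mu (mrow k lam)) :
    Mentioned k (2 * k) lam mu (mrow k lam, k + 1) ↔ mu (mrow k lam + 1) < k := by
  have hm : 1 ≤ mrow k lam := one_le_mrow
  have hmu_gt : ∀ r, 1 ≤ r → r ≤ mrow k lam → k < mu r :=
    fun r hr hrm => harrow.lt_apply_of_le_mrow hlam h2 hr hrm
  have hlam_col : ∀ c, 1 ≤ c → c ≤ k → mrow k lam ≤ colLen lam c :=
    fun c hc hck => (le_colLen_iff hlam hc hm).2 (by omega)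
  constructor
  · rintro ⟨c, hc, hck, hment⟩
    by_contra hge
    have := harrow.apply_succ_le hm
    have hmu_col : mrow k lam + 1 ≤ colLen mu c := (le_colLen_iff hmu hc (by omega)).2 (by omega)
    have := hlam_col c hc hck
    -- a mention through column `c` starts in row `c + m' - k ≤ m'`, where `μ` covers column `c`
    rcases hment with ⟨heq, -, -, -, hsum⟩ |
      ⟨-, ⟨-, -, hsum⟩ | ⟨r, ⟨⟨hr, -, -⟩, hnot⟩, -, -, hsum⟩⟩
    · dsimp only at hsum
      omega
    · dsimp only at hsum
      omega
    · dsimp only at hsum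
      exact hnot ⟨hr, hc, by have := hmu_gt r hr (by omega); dsimp only; omega⟩
  · intro hlt
    have hmu_col : colLen mu k = mrow k lam := by
      have := (le_colLen_iff hmu hk hm).2 (hmu_gt _ hm le_rfl).le
      have := (le_colLen_iff hmu hk (Nat.le_add_left 1 _)).not.2 (not_le.2 hlt)
      omega
    have hkrel : Krel k (2 * k) (mrow k lam, k) (mrow k lam, k + 1) := by
      refine ⟨le_rfl, Nat.lt_succ_self k, ?_⟩
      dsimp only
      omega
    rcases (hlam_col k hk le_rfl).eq_or_lt with heq | hlt'
    · exact ⟨k, hk, le_rfl, .inl ⟨by omega, by omega, heq ▸ hkrel⟩⟩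
    · exact ⟨k, hk, le_rfl, .inr ⟨by omega, .inl (hmu_col ▸ hkrel)⟩⟩

theorem PieriArrow.mrow_succ_mem_aset_iff (hk : 1 ≤ k) (hlam : IsPartition lam)
    (hmu : IsPartition mu) (harrow : PieriArrow k (2 * k) lam mu)
    (h1 : lam (mrow k lam) = k) (h2 : k < mu (mrow k lam)) :
    (mrow k lam, k + 1) ∈ Aset k (2 * k) lam mu ↔ PosType k mu := by
  rw [harrow.posType_iff hlam hmu h1 h2]
  change _ ∧ k < k + 1 ∧ ¬ Mentioned k (2 * k) lam mu (mrow k lam, k + 1) ↔ _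
  rw [harrow.mentioned_mrow_iff hk hlam hmu h1 h2]
  have := harrow.apply_succ_le (one_le_mrow (k := k) (lam := lam))
  exact ⟨fun h => by omega, fun h => ⟨mrow_succ_mem_diagram_diff h1 h2, by omega, by omega⟩⟩

theorem PieriArrow.eq_of_near_mrow (hlam : IsPartition lam) (harrow : PieriArrow k K lam mu)
    (h1 : lam (mrow k lam) = k) (h2 : k < mu (mrow k lam)) {x : ℕ × ℕ}
    (hx : x ∈ Aset k K lam mu) (hnear : Near (mrow k lam, k) x) : x = (mrow k lam, k + 1) :=
  harrow.injOn_snd_diagram_diff hlam hx.1 (mrow_succ_mem_diagram_diff h1 h2)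
    (by have := hx.2.1; have := hnear.2.2.2; dsimp only at *; omega)

theorem PieriArrow.posType_of_posType (hk : 1 ≤ k) (hlam : IsPartition lam)
    (hmu : IsPartition mu) (hlamk : IsKStrict k lam) (harrow : PieriArrow k (2 * k) lam mu)
    (hB : ¬ (lam (mrow k lam) = k ∧ k < mu (mrow k lam))) (hT : PosType k lam) :
    PosType k mu := by
  have hm : 1 ≤ mrow k lam := one_le_mrow
  obtain ⟨r, hr, hrk⟩ := hT
  have h1 : lam (mrow k lam) = k := by
    have hrm : mrow k lam ≤ r := not_lt.1 fun h => by
      have := (lt_mrow_iff hlam hr).1 h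
      omega
    have := hlam.1 _ r hm hrm
    have := apply_mrow_le (k := k) hlam
    omega
  by_contra hT'
  have hlt : mu (mrow k lam) < k := lt_of_le_of_ne (not_lt.1 fun h => hB ⟨h1, h⟩)
    fun h => hT' ⟨_, hm, h⟩
  have hmu_col : colLen mu k < mrow k lam := by
    have := (le_colLen_iff hmu hk hm).not.2 (not_le.2 hlt)
    omega
  have hlam_col : mrow k lam ≤ colLen lam k := (le_colLen_iff hlam hk hm).2 h1.ge
  -- Pieri condition (2) for column `k`, which shrinks from `λ` to `μ`
  obtain ⟨-, -, ⟨b, ⟨⟨⟨hb1, hb2, -⟩, hblam⟩, -, hbk, hbsum⟩, -⟩, -⟩ :=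
    harrow.2.2 k hk le_rfl (by omega)
  dsimp only at hbk hbsum
  have := mrow_add_le_apply_add hlam hlamk hb1 (by omega)
  exact hblam ⟨hb1, hb2, by omega⟩

end Pieri

section Ahat

variable {k K : ℕ} {lam mu : ℕ → ℕ}

theorem ahat_eq_insert (h : lam (mrow k lam) = k ∧ k < mu (mrow k lam)) :
    Ahat k K lam mu = insert (mrow k lam, k) (Aset k K lam mu) := by
  rw [Ahat, Set.insert_eq, Set.union_comm]
  congr 1
  ext b
  simp [h]

theorem ahat_eq_aset (h : ¬ (lam (mrow k lam) = k ∧ k < mu (mrow k lam))) :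
    Ahat k K lam mu = Aset k K lam mu :=
  Set.union_eq_left.2 fun _ hb => absurd ⟨hb.1, hb.2.1⟩ h

theorem aset_finite (hmu : IsPartition mu) : (Aset k K lam mu).Finite :=
  (diagram_finite hmu).subset fun _ hb => hb.1.1

theorem ahat_finite (hmu : IsPartition mu) : (Ahat k K lam mu).Finite :=
  (aset_finite hmu).union ((Set.finite_singleton _).subset fun _ hb => hb.2.2)

theorem PieriArrow.injOn_snd_ahat (hlam : IsPartition lam) (harrow : PieriArrow k K lam mu) :
    Set.InjOn Prod.snd (Ahat k K lam mu) := by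
  rintro a (ha | ⟨-, -, rfl⟩) b (hb | ⟨-, -, rfl⟩) hab
  · exact harrow.injOn_snd_diagram_diff hlam ha.1 hb.1 hab
  · exact absurd hab (ne_of_gt ha.2.1)
  · exact absurd hab (ne_of_lt hb.2.1)
  · rfl

theorem one_le_snd_of_mem_ahat (hk : 1 ≤ k) {b : ℕ × ℕ} (hb : b ∈ Ahat k K lam mu) :
    1 ≤ b.2 := by
  rcases hb with hb | ⟨-, -, rfl⟩
  · exact hk.trans hb.2.1.le
  · exact hk

end Ahat

end Stmt19

open Stmt19 in
theorem stmt19_general (k : ℕ) (hk : 1 ≤ k)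
    (lam mu : ℕ → ℕ)
    (hlam : IsPartition lam) (hmu : IsPartition mu)
    (hlamk : IsKStrict k lam)
    (harrow : PieriArrow k (2 * k) lam mu) :
    Nhat k (2 * k) lam mu = {b : ℕ × ℕ | Optional k (2 * k) lam mu b}.ncard := by
  have hcount : {b | Optional k (2 * k) lam mu b}.ncard
      = Nat.card (Components Near (Ahat k (2 * k) lam mu)) :=
    (card_components_eq_ncard_optionalIn (ahat_finite hmu) (harrow.injOn_snd_ahat hlam)
      fun _ => one_le_snd_of_mem_ahat hk).symm
  rw [hcount, Nhat, Ncomp]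
  by_cases hB : lam (mrow k lam) = k ∧ k < mu (mrow k lam)
  · have hnotin : (mrow k lam, k) ∉ Aset k (2 * k) lam mu := fun h => lt_irrefl k h.2.1
    have hadj : ∀ x ∈ Aset k (2 * k) lam mu, Near (mrow k lam, k) x →
        x = (mrow k lam, k + 1) :=
      fun x hx => harrow.eq_of_near_mrow hlam hB.1 hB.2 hx
    rw [ahat_eq_insert hB]
    by_cases hT : PosType k mu
    · rw [if_neg fun h => h.2 hT, add_zero]
      have hin := (harrow.mrow_succ_mem_aset_iff hk hlam hmu hB.1 hB.2).2 hT
      exact (card_components_insert_of_unique_adj hnotin hin (by unfold Near; omega) hadj).symm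
    · rw [if_pos ⟨⟨_, one_le_mrow, hB.1⟩, hT⟩]
      have hout := (harrow.mrow_succ_mem_aset_iff hk hlam hmu hB.1 hB.2).not.2 hT
      have : Finite (Aset k (2 * k) lam mu) := (aset_finite hmu).to_subtype
      exact (card_components_insert_of_isolated hnotin
        fun x hx hnear => hout (hadj x hx hnear ▸ hx)).symm
  · rw [ahat_eq_aset hB,
      if_neg fun h => h.2 (harrow.posType_of_posType hk hlam hmu hlamk hB h.1), add_zero]

open Stmt19 in
theorem stmt19 (k : ℕ) (hk : 1 ≤ k) (m n : ℕ) (hm : m + k = n + 1)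
    (lam mu : ℕ → ℕ)
    (hlam : IsPartition lam) (hmu : IsPartition mu)
    (hlamk : IsKStrict k lam) (hmuk : IsKStrict k mu)
    (hrect_len : ∀ r : ℕ, m < r → lam r = 0)
    (hrect_wid : ∀ r : ℕ, lam r ≤ n + k)
    (harrow : PieriArrow k (2 * k) lam mu) :
    Nhat k (2 * k) lam mu = {b : ℕ × ℕ | Optional k (2 * k) lam mu b}.ncard :=
  stmt19_general k hk lam mu hlam hmu hlamk harrow
end
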